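/- Suppose the following finitary stable regularity holds: for all k, δ, ε, σ there is a bound N(k,δ,ε,σ) such that every (k,δ)-stable f : V × W → [0,1] on finite sets admits partitions V = V_0 ∪ … ∪ V_m, W = W_0 ∪ … ∪ W_n with m,n ≤ N, |V_0| ≤ ε|V_1|, |W_0| ≤ ε|W_1|, and each pair (V_i,W_j) for (i,j) ∈ [m]×[n] being (5δ+ε; σ(mn))-homogeneous. Then every (k,δ)-stable f : V × W → [0,1] admits, for any ε > 0 and σ : ℕ → (0,1), partitions V = V_0 ∪ V_1 ∪ … ∪ V_m and W = W_0 ∪ W_1 ∪ … ∪ W_n with m,n bounded in terms of k,δ,ε,σ, such that: (i) each (V_i,W_j), (i,j) ∈ [m]×[n], is (5δ+ε; σ(mn))-homogeneous; (ii) |V_i| = |V_j| for 1 ≤ i,j ≤ m and |W_i| = |W_j| for 1 ≤ i,j ≤ n; (iii) |V_0| ≤ ε|V| and |W_0| ≤ ε|W|. -/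

import Mathlib

open scoped Classical

/-- `f` is `(k,δ)`-stable. -/
def IsStable {V W : Type*} (k : ℕ) (δ : ℝ) (f : V → W → ℝ) : Prop :=
  ¬ ∃ (a : Fin k → V) (b : Fin k → W), ∀ i j : Fin k, i < j →
    δ ≤ |f (a i) (b j) - f (a j) (b i)|

/-- `P` is a partition of `α` into (possibly empty) pieces. -/
def IsPartition {α : Type*} {m : ℕ} (P : Fin m → Finset α) : Prop :=
  (∀ i j, i ≠ j → Disjoint (P i) (P j)) ∧ ∀ a : α, ∃ i, a ∈ P i

/-- The pair `(A,B)` is `(δ;γ,ε)`-homogeneous for `f`. -/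
def Homog {V W : Type*} (f : V → W → ℝ) (A : Finset V) (B : Finset W)
    (δ γ ε : ℝ) : Prop :=
  ∃ A' ⊆ A, ∃ B' ⊆ B,
    (1 - γ) * (A.card : ℝ) ≤ (A'.card : ℝ) ∧
    (1 - γ) * (B.card : ℝ) ≤ (B'.card : ℝ) ∧
    ∃ r ∈ Set.Icc (0:ℝ) 1, ∃ s ∈ Set.Icc (0:ℝ) 1,
      (∀ b ∈ B', (1 - ε) * (A.card : ℝ) ≤ ((A.filter fun a => |f a b - r| ≤ δ).card : ℝ)) ∧
      (∀ a ∈ A', (1 - ε) * (B.card : ℝ) ≤ ((B.filter fun b => |f a b - s| ≤ δ).card : ℝ))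

/-!
Apply the regularity lemma with `ε/2` and a faster decay `σ'`, then cut every non-exceptional
part `P` of `V` into blocks of the common size `q = ⌈ε|V|/(2m')⌉`, moving the fewer than `q`
leftover elements of each part into the exceptional part. That part then has size at most
`ε|V|/2 + m'(q - 1) ≤ ε|V|`, there are at most `2m'/ε` blocks, and a block `Q ⊆ P` satisfies
`|P| ≤ (2m'/ε)|Q|`. Hence restricting the exceptional sets that witness homogeneity of `(P, P')`
to a pair of blocks costs at most a `σ'(m'n') · 2m'/ε` fraction of each block, and `σ'` is chosen
so that this is at most `σ(mn)` (note `mn ≤ (2m'n'/ε)²`).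
-/

open Finset Function

section Homogeneity

variable {α V W : Type*}

theorem one_sub_mul_card_le_card_inter {A A₁ G : Finset α} {γ γ₁ : ℝ} (hA₁ : A₁ ⊆ A)
    (hG : G ⊆ A) (hGA : (1 - γ) * #A ≤ #G) (hγ : γ * #A ≤ γ₁ * #A₁) :
    (1 - γ₁) * #A₁ ≤ #(A₁ ∩ G) := by
  have hcard : #A₁ + #G ≤ #(A₁ ∩ G) + #A := by
    rw [← card_union_add_card_inter, add_comm]
    exact Nat.add_le_add_left (card_le_card (union_subset hA₁ hG)) _
  have : (#A₁ : ℝ) + #G ≤ #(A₁ ∩ G) + #A := by exact_mod_cast hcard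
  linarith

theorem Homog.mono {f : V → W → ℝ} {A A₁ : Finset V} {B B₁ : Finset W}
    {δ δ₁ γ γ₁ ε ε₁ : ℝ} (h : Homog f A B δ γ ε) (hA : A₁ ⊆ A) (hB : B₁ ⊆ B) (hδ : δ ≤ δ₁)
    (hγA : γ * #A ≤ γ₁ * #A₁) (hγB : γ * #B ≤ γ₁ * #B₁)
    (hεA : ε * #A ≤ ε₁ * #A₁) (hεB : ε * #B ≤ ε₁ * #B₁) :
    Homog f A₁ B₁ δ₁ γ₁ ε₁ := by
  obtain ⟨A', hA', B', hB', hA'A, hB'B, r, hr, s, hs, hrow, hcol⟩ := h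
  refine ⟨A₁ ∩ A', inter_subset_left, B₁ ∩ B', inter_subset_left,
    one_sub_mul_card_le_card_inter hA hA' hA'A hγA, one_sub_mul_card_le_card_inter hB hB' hB'B hγB,
    r, hr, s, hs, fun b hb => ?_, fun a ha => ?_⟩
  · refine (one_sub_mul_card_le_card_inter hA (filter_subset _ _)
      (hrow b (mem_inter.1 hb).2) hεA).trans ?_
    exact_mod_cast card_le_card fun a ha => by
      simp only [mem_inter, mem_filter] at ha ⊢
      exact ⟨ha.1, ha.2.2.trans hδ⟩
  · refine (one_sub_mul_card_le_card_inter hB (filter_subset _ _)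
      (hcol a (mem_inter.1 ha).2) hεB).trans ?_
    exact_mod_cast card_le_card fun b hb => by
      simp only [mem_inter, mem_filter] at hb ⊢
      exact ⟨hb.1, hb.2.2.trans hδ⟩

end Homogeneity

section Blocks

variable {α : Type*} [DecidableEq α] {q : ℕ}

theorem exists_pairwiseDisjoint_subset_powersetCard (hq : 0 < q) (S : Finset α) :
    ∃ 𝒬 ⊆ S.powersetCard q, (𝒬 : Set (Finset α)).PairwiseDisjoint id ∧
      #(S \ 𝒬.biUnion id) < q := by
  induction S using Finset.strongInduction with
  | H S ih =>
  by_cases hS : #S < q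
  · exact ⟨∅, empty_subset _, by simp, by simpa⟩
  obtain ⟨T, hTS, hT⟩ := exists_subset_card_eq (not_lt.1 hS)
  obtain ⟨𝒬, h𝒬, hdisj, hrest⟩ := ih (S \ T) (sdiff_ssubset hTS (card_pos.1 (hT ▸ hq)))
  refine ⟨insert T 𝒬, insert_subset (mem_powersetCard.2 ⟨hTS, hT⟩)
    (h𝒬.trans (powersetCard_mono sdiff_subset)), ?_, ?_⟩
  · rw [coe_insert]
    exact hdisj.insert fun U hU _ => disjoint_sdiff.mono_right (mem_powersetCard.1 (h𝒬 hU)).1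
  · rwa [biUnion_insert, id, ← sup_eq_union, ← sdiff_sdiff_left]

theorem exists_pairwiseDisjoint_blocks {ι : Type*} [Fintype ι] {P : ι → Finset α}
    (hP : Pairwise (Disjoint on P)) (hq : 0 < q) :
    ∃ 𝒬 : Finset (Finset α), (𝒬 : Set (Finset α)).PairwiseDisjoint id ∧
      (∀ T ∈ 𝒬, #T = q ∧ ∃ i, T ⊆ P i) ∧
      #(univ.biUnion P \ 𝒬.biUnion id) ≤ Fintype.card ι * (q - 1) := by
  choose 𝒬 h𝒬 hdisj hrest using fun i => exists_pairwiseDisjoint_subset_powersetCard hq (P i)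
  have hmem : ∀ i, ∀ T ∈ 𝒬 i, T ⊆ P i ∧ #T = q := fun i T hT => mem_powersetCard.1 (h𝒬 i hT)
  refine ⟨univ.biUnion 𝒬, ?_, fun T hT => ?_, ?_⟩
  · intro T hT U hU hTU
    obtain ⟨i, -, hT⟩ := mem_biUnion.1 hT
    obtain ⟨j, -, hU⟩ := mem_biUnion.1 hU
    obtain rfl | hij := eq_or_ne i j
    · exact hdisj i hT hU hTU
    · exact (hP hij).mono (hmem i T hT).1 (hmem j U hU).1
  · obtain ⟨i, -, hT⟩ := mem_biUnion.1 hT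
    exact ⟨(hmem i T hT).2, i, (hmem i T hT).1⟩
  · calc #(univ.biUnion P \ (univ.biUnion 𝒬).biUnion id)
        ≤ #(univ.biUnion fun i => P i \ (𝒬 i).biUnion id) := card_le_card ?_
      _ ≤ ∑ i, #(P i \ (𝒬 i).biUnion id) := card_biUnion_le
      _ ≤ Fintype.card ι * (q - 1) := by
        simpa using sum_le_card_nsmul univ _ (q - 1) fun i _ => Nat.le_sub_one_of_lt (hrest i)
    intro a ha
    simp only [mem_sdiff, mem_biUnion, mem_univ, true_and, id, not_exists, not_and] at ha ⊢
    obtain ⟨⟨i, hi⟩, hout⟩ := ha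
    exact ⟨i, hi, fun T hT => hout T ⟨i, hT⟩⟩

variable [Fintype α]

/-- The blocks of `𝒬`, numbered `1, …, #𝒬`, with the points they miss as part `0`. -/
noncomputable def blocksWithRest (𝒬 : Finset (Finset α)) : Fin (#𝒬 + 1) → Finset α :=
  Fin.cons (univ \ 𝒬.biUnion id) fun j => (𝒬.equivFin.symm j : Finset α)

theorem blocksWithRest_mem {𝒬 : Finset (Finset α)} {i : Fin (#𝒬 + 1)} (hi : i ≠ 0) :
    blocksWithRest 𝒬 i ∈ 𝒬 := by
  obtain ⟨j, rfl⟩ := Fin.exists_succ_eq.2 hi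
  exact (𝒬.equivFin.symm j).2

theorem isPartition_blocksWithRest {𝒬 : Finset (Finset α)}
    (h𝒬 : (𝒬 : Set (Finset α)).PairwiseDisjoint id) : IsPartition (blocksWithRest 𝒬) := by
  have hrest (j : Fin #𝒬) : Disjoint (blocksWithRest 𝒬 0) (blocksWithRest 𝒬 j.succ) :=
    disjoint_sdiff_self_left.mono_right
      (subset_biUnion_of_mem id (blocksWithRest_mem j.succ_ne_zero))
  refine ⟨fun i j hij => ?_, fun a => ?_⟩
  · cases i using Fin.cases with
    | zero =>
      cases j using Fin.cases with
      | zero => exact absurd rfl hij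
      | succ j => exact hrest j
    | succ i =>
      cases j using Fin.cases with
      | zero => exact (hrest i).symm
      | succ j =>
        refine h𝒬 (blocksWithRest_mem i.succ_ne_zero) (blocksWithRest_mem j.succ_ne_zero) ?_
        simpa [blocksWithRest, Subtype.val_inj] using hij
  · by_cases ha : a ∈ 𝒬.biUnion id
    · obtain ⟨T, hT, haT⟩ := mem_biUnion.1 ha
      exact ⟨(𝒬.equivFin ⟨T, hT⟩).succ, by simpa [blocksWithRest] using haT⟩
    · exact ⟨0, by simpa [blocksWithRest] using ha⟩

theorem IsPartition.exists_refinement_card_eq {m' : ℕ} {P : Fin (m' + 1) → Finset α}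
    (hP : IsPartition P) (hq : 0 < q) :
    ∃ (m : ℕ) (Q : Fin (m + 1) → Finset α), IsPartition Q ∧ m * q ≤ Fintype.card α ∧
      #(Q 0) ≤ #(P 0) + m' * (q - 1) ∧ ∀ i ≠ 0, #(Q i) = q ∧ ∃ j ≠ 0, Q i ⊆ P j := by
  obtain ⟨𝒬, hdisj, hblocks, hrest⟩ := exists_pairwiseDisjoint_blocks
    (P := fun i : Fin m' => P i.succ) (fun i j hij => hP.1 _ _ (Fin.succ_injective _ |>.ne hij)) hq
  refine ⟨#𝒬, blocksWithRest 𝒬, isPartition_blocksWithRest hdisj, ?_, ?_, fun i hi => ?_⟩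
  · calc #𝒬 * q = #(𝒬.biUnion id) := by
          rw [card_biUnion hdisj]; exact (sum_const_nat fun T hT => (hblocks T hT).1).symm
      _ ≤ Fintype.card α := card_le_univ _
  · rw [Fintype.card_fin] at hrest
    calc #(blocksWithRest 𝒬 0)
        ≤ #(P 0 ∪ (univ.biUnion (fun i : Fin m' => P i.succ) \ 𝒬.biUnion id)) := card_le_card ?_
      _ ≤ #(P 0) + m' * (q - 1) := (card_union_le _ _).trans (by omega)
    intro a ha
    obtain ⟨i, hai⟩ := hP.2 a
    cases i using Fin.cases with
    | zero => exact mem_union_left _ hai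
    | succ i =>
      simp only [blocksWithRest, Fin.cons_zero, mem_sdiff, mem_univ, true_and] at ha
      exact mem_union_right _ (mem_sdiff.2 ⟨mem_biUnion.2 ⟨i, mem_univ _, hai⟩, ha⟩)
  · obtain ⟨hcard, j, hj⟩ := hblocks _ (blocksWithRest_mem hi)
    exact ⟨hcard, j.succ, j.succ_ne_zero, hj⟩

theorem IsPartition.exists_equipartition [Nonempty α] {ε : ℝ} (hε : 0 < ε) {m' : ℕ}
    (hm' : 0 < m') {P : Fin (m' + 1) → Finset α} (hP : IsPartition P)
    (hP0 : (#(P 0) : ℝ) ≤ ε / 2 * Fintype.card α) :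
    ∃ (m : ℕ) (Q : Fin (m + 1) → Finset α), IsPartition Q ∧ (m : ℝ) ≤ 2 * m' / ε ∧
      (#(Q 0) : ℝ) ≤ ε * Fintype.card α ∧ (∀ i j, i ≠ 0 → j ≠ 0 → #(Q i) = #(Q j)) ∧
      ∀ i ≠ 0, ∃ j ≠ 0, Q i ⊆ P j ∧ (#(P j) : ℝ) ≤ 2 * m' / ε * #(Q i) := by
  have hα : (0 : ℝ) < Fintype.card α := by exact_mod_cast Fintype.card_pos
  set x := ε * Fintype.card α / (2 * m') with hx_def
  have hx : 0 < x := by positivity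
  have hcard : (Fintype.card α : ℝ) = 2 * m' / ε * x := by rw [hx_def]; field_simp
  have hq : x ≤ ⌈x⌉₊ := Nat.le_ceil x
  have hq' : (⌈x⌉₊ : ℝ) - 1 ≤ x := by linarith [Nat.ceil_lt_add_one hx.le]
  obtain ⟨m, Q, hQ, hmq, hQ0, hblocks⟩ := hP.exists_refinement_card_eq (Nat.ceil_pos.2 hx)
  refine ⟨m, Q, hQ, ?_, ?_, fun i j hi hj => by rw [(hblocks i hi).1, (hblocks j hj).1],
    fun i hi => ?_⟩
  · have hmq : (m : ℝ) * ⌈x⌉₊ ≤ Fintype.card α := by exact_mod_cast hmq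
    refine le_of_mul_le_mul_right ?_ hx
    calc (m : ℝ) * x ≤ m * ⌈x⌉₊ := by gcongr
      _ ≤ 2 * m' / ε * x := hcard ▸ hmq
  · have hQ0 : (#(Q 0) : ℝ) ≤ #(P 0) + m' * ((⌈x⌉₊ : ℝ) - 1) := by
      rw [← Nat.cast_pred (Nat.ceil_pos.2 hx)]
      exact_mod_cast hQ0
    have hm'x : m' * x = ε * Fintype.card α / 2 := by rw [hx_def]; field_simp
    nlinarith [mul_le_mul_of_nonneg_left hq' m'.cast_nonneg]
  · obtain ⟨hQi, j, hj, hsub⟩ := hblocks i hi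
    refine ⟨j, hj, hsub, ?_⟩
    calc (#(P j) : ℝ) ≤ Fintype.card α := by exact_mod_cast card_le_univ _
      _ ≤ 2 * m' / ε * #(Q i) := by rw [hQi, hcard]; gcongr

end Blocks

section Decay

noncomputable def prefixMin {β : Type*} [LinearOrder β] (σ : ℕ → β) (K : ℕ) : β :=
  (range (K + 1)).inf' nonempty_range_add_one σ

theorem prefixMin_le {β : Type*} [LinearOrder β] (σ : ℕ → β) {s K : ℕ} (h : s ≤ K) :
    prefixMin σ K ≤ σ s :=
  inf'_le σ (mem_range.2 (Nat.lt_succ_of_le h))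

theorem lt_prefixMin {β : Type*} [LinearOrder β] {σ : ℕ → β} {a : β} (h : ∀ n, a < σ n)
    (K : ℕ) : a < prefixMin σ K :=
  (lt_inf'_iff _).2 fun n _ => h n

/-- The decay fed to the regularity lemma, as a function of `t = m'n'`: the range
`0, …, (2t/ε)²` contains `mn`, and `ε/(ε + 2t) ≤ ε/(2m')` pays for a block being only a
fraction `ε/(2m')` of its part. -/
noncomputable def decay (σ : ℕ → ℝ) (ε : ℝ) (t : ℕ) : ℝ :=
  prefixMin σ ⌊(2 * t / ε) ^ 2⌋₊ * (ε / (ε + 2 * t))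

variable {σ : ℕ → ℝ} {ε : ℝ}

theorem decay_mem_Ioo (hε : 0 < ε) (hσ : ∀ n, σ n ∈ Set.Ioo (0 : ℝ) 1) (t : ℕ) :
    decay σ ε t ∈ Set.Ioo (0 : ℝ) 1 := by
  have hmin_pos := lt_prefixMin (fun n => (hσ n).1) ⌊(2 * t / ε) ^ 2⌋₊
  have hmin_lt : prefixMin σ ⌊(2 * t / ε) ^ 2⌋₊ < 1 :=
    (prefixMin_le σ (Nat.zero_le _)).trans_lt (hσ 0).2
  have hfac : ε / (ε + 2 * t) ≤ 1 :=
    (div_le_one (by positivity)).2 (by linarith [t.cast_nonneg (α := ℝ)])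
  refine ⟨by unfold decay; positivity, ?_⟩
  calc decay σ ε t ≤ prefixMin σ ⌊(2 * t / ε) ^ 2⌋₊ * 1 := by unfold decay; gcongr
    _ < 1 := by rwa [mul_one]

theorem decay_mul_le_mul (hε : 0 < ε) (hσ : ∀ n, 0 < σ n) {t p m n : ℕ} (hp : p ≤ t)
    (hm : (m : ℝ) ≤ 2 * t / ε) (hn : (n : ℝ) ≤ 2 * t / ε) {x y : ℝ} (hy : 0 ≤ y)
    (hxy : x ≤ 2 * p / ε * y) : decay σ ε t * x ≤ σ (m * n) * y := by
  have hmin_le : prefixMin σ ⌊(2 * t / ε) ^ 2⌋₊ ≤ σ (m * n) := by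
    refine prefixMin_le σ (Nat.le_floor ?_)
    push_cast
    rw [sq]
    exact mul_le_mul hm hn n.cast_nonneg (by positivity)
  have hmin_pos := lt_prefixMin hσ ⌊(2 * t / ε) ^ 2⌋₊
  have hfac : ε / (ε + 2 * t) * (2 * p / ε) ≤ 1 := by
    rw [div_mul_div_comm, div_le_one (by positivity)]
    have : (p : ℝ) ≤ t := by exact_mod_cast hp
    nlinarith
  calc decay σ ε t * x ≤ decay σ ε t * (2 * p / ε * y) := by
        gcongr
        unfold decay
        positivity
    _ = prefixMin σ ⌊(2 * t / ε) ^ 2⌋₊ * (ε / (ε + 2 * t) * (2 * p / ε)) * y := by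
        unfold decay; ring
    _ ≤ σ (m * n) * 1 * y := by gcongr; exact (hσ _).le
    _ = σ (m * n) * y := by ring

end Decay

/-- The equipartition version of stable regularity follows from the finitary stable
regularity lemma with decay function. -/
theorem equipartition_from_stable_regularity
    (H : ∀ (k : ℕ) (δ ε : ℝ) (σ : ℕ → ℝ), 0 < δ → 0 < ε →
      (∀ n, σ n ∈ Set.Ioo (0:ℝ) 1) →
      ∃ N : ℕ, ∀ (V W : Type) [Fintype V] [Fintype W] [Nonempty V] [Nonempty W]
        (f : V → W → ℝ), (∀ a b, f a b ∈ Set.Icc (0:ℝ) 1) → IsStable k δ f →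
        ∃ (m n : ℕ) (Vp : Fin (m+1) → Finset V) (Wp : Fin (n+1) → Finset W),
          1 ≤ m ∧ 1 ≤ n ∧ m ≤ N ∧ n ≤ N ∧ IsPartition Vp ∧ IsPartition Wp ∧
          ((Vp 0).card : ℝ) ≤ ε * ((Vp 1).card : ℝ) ∧
          ((Wp 0).card : ℝ) ≤ ε * ((Wp 1).card : ℝ) ∧
          ∀ (i : Fin (m+1)) (j : Fin (n+1)), i ≠ 0 → j ≠ 0 →
            Homog f (Vp i) (Wp j) (5*δ + ε) (σ (m*n)) (σ (m*n))) :
    ∀ (k : ℕ) (δ ε : ℝ) (σ : ℕ → ℝ), 0 < δ → 0 < ε →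
      (∀ n, σ n ∈ Set.Ioo (0:ℝ) 1) →
      ∃ N : ℕ, ∀ (V W : Type) [Fintype V] [Fintype W] [Nonempty V] [Nonempty W]
        (f : V → W → ℝ), (∀ a b, f a b ∈ Set.Icc (0:ℝ) 1) → IsStable k δ f →
        ∃ (m n : ℕ) (Vp : Fin (m+1) → Finset V) (Wp : Fin (n+1) → Finset W),
          m ≤ N ∧ n ≤ N ∧ IsPartition Vp ∧ IsPartition Wp ∧
          (∀ (i : Fin (m+1)) (j : Fin (n+1)), i ≠ 0 → j ≠ 0 →
            Homog f (Vp i) (Wp j) (5*δ + ε) (σ (m*n)) (σ (m*n))) ∧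
          (∀ i j : Fin (m+1), i ≠ 0 → j ≠ 0 → (Vp i).card = (Vp j).card) ∧
          (∀ i j : Fin (n+1), i ≠ 0 → j ≠ 0 → (Wp i).card = (Wp j).card) ∧
          ((Vp 0).card : ℝ) ≤ ε * (Fintype.card V : ℝ) ∧
          ((Wp 0).card : ℝ) ≤ ε * (Fintype.card W : ℝ) := by
  intro k δ ε σ hδ hε hσ
  obtain ⟨N, hN⟩ := H k δ (ε / 2) (decay σ ε) hδ (half_pos hε) (decay_mem_Ioo hε hσ)
  refine ⟨⌊2 * N / ε⌋₊, fun V W _ _ _ _ f hf hstab => ?_⟩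
  obtain ⟨m', n', Vp, Wp, hm', hn', hm'N, hn'N, hVp, hWp, hV0, hW0, hhom⟩ := hN V W f hf hstab
  obtain ⟨m, QV, hQV, hm, hQV0, hQVeq, hQVsub⟩ :=
    hVp.exists_equipartition hε hm' (hV0.trans (by gcongr; exact card_le_univ _))
  obtain ⟨n, QW, hQW, hn, hQW0, hQWeq, hQWsub⟩ :=
    hWp.exists_equipartition hε hn' (hW0.trans (by gcongr; exact card_le_univ _))
  have hmt : (m : ℝ) ≤ 2 * (m' * n' : ℕ) / ε :=
    hm.trans (by gcongr; exact Nat.le_mul_of_pos_right m' hn')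
  have hnt : (n : ℝ) ≤ 2 * (m' * n' : ℕ) / ε :=
    hn.trans (by gcongr; exact Nat.le_mul_of_pos_left n' hm')
  refine ⟨m, n, QV, QW, Nat.le_floor (hm.trans (by gcongr)), Nat.le_floor (hn.trans (by gcongr)),
    hQV, hQW, fun i j hi hj => ?_, hQVeq, hQWeq, hQV0, hQW0⟩
  obtain ⟨a, ha, hVsub, hVcard⟩ := hQVsub i hi
  obtain ⟨b, hb, hWsub, hWcard⟩ := hQWsub j hj
  have hA := decay_mul_le_mul hε (fun n => (hσ n).1) (Nat.le_mul_of_pos_right m' hn') hmt hnt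
    (Nat.cast_nonneg _) hVcard
  have hB := decay_mul_le_mul hε (fun n => (hσ n).1) (Nat.le_mul_of_pos_left n' hm') hmt hnt
    (Nat.cast_nonneg _) hWcard
  exact (hhom a b ha hb).mono hVsub hWsub (by linarith) hA hB hA hB
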